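/- Let B ∈ B(H) and let 0 ≤ α ≤ 1. Then ((1+α)/8)·‖|B|⁴ + |B*|⁴‖ + ((1−α)/4)·w(B²)² + (1/4)·‖|B|² + |B*|²‖·w(B²) ≤ (1/2)·‖|B|⁴ + |B*|⁴‖. -/

import Mathlib

open ContinuousLinearMap

variable {H : Type*} [NormedAddCommGroup H] [InnerProductSpace ℂ H] [CompleteSpace H]

/-- The numerical radius of a bounded linear operator:
`w(T) = sup { |⟨Tx, x⟩| : ‖x‖ = 1 }`. -/
noncomputable def numRadius {E : Type*} [NormedAddCommGroup E] [InnerProductSpace ℂ E]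
    (T : E →L[ℂ] E) : ℝ :=
  sSup {r : ℝ | ∃ x : E, ‖x‖ = 1 ∧ r = ‖(inner ℂ (T x) x : ℂ)‖}

/-- The absolute value `|T| = (T*T)^(1/2)` of a bounded linear operator.
Note `opAbs (adjoint T) = (T T*)^(1/2) = |T*|`. -/
noncomputable def opAbs (T : H →L[ℂ] H) : H →L[ℂ] H := CFC.sqrt (adjoint T * T)

/-- The off-diagonal operator matrix `[[0, B], [C, 0]]` acting on `H ⊕ H`
(with the Hilbert space structure `WithLp 2 (H × H)`) by `(x₁, x₂) ↦ (B x₂, C x₁)`. -/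
noncomputable def offDiag (B C : H →L[ℂ] H) :
    WithLp 2 (H × H) →L[ℂ] WithLp 2 (H × H) :=
  ((WithLp.prodContinuousLinearEquiv 2 ℂ H H).symm : (H × H) →L[ℂ] WithLp 2 (H × H)).comp
    (((B.comp (ContinuousLinearMap.snd ℂ H H)).prod
        (C.comp (ContinuousLinearMap.fst ℂ H H))).comp
      ((WithLp.prodContinuousLinearEquiv 2 ℂ H H) : WithLp 2 (H × H) →L[ℂ] H × H))


/-!
Write `M = ‖|B|² + |B*|²‖`, `N = ‖|B|⁴ + |B*|⁴‖` and `w = w(B²)`. Since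
`|⟨B²x, x⟩| = |⟨Bx, B*x⟩| ≤ (‖Bx‖² + ‖B*x‖²) / 2 = ⟨(|B|² + |B*|²)x, x⟩ / 2`, we get `w ≤ M / 2`.
For self-adjoint `a, c` in a C⋆-algebra, `0 ≤ (a + c)² ≤ (a + c)² + (a - c)² = 2(a² + c²)`,
so `‖a + c‖² ≤ 2‖a² + c²‖`; with `a = |B|²`, `c = |B*|²` this is `M² ≤ 2N`.
-/

theorem IsSelfAdjoint.norm_add_sq_le_two_mul {A : Type*} [CStarAlgebra A] [PartialOrder A]
    [StarOrderedRing A] {a c : A} (ha : IsSelfAdjoint a) (hc : IsSelfAdjoint c) :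
    ‖a + c‖ ^ 2 ≤ 2 * ‖a ^ 2 + c ^ 2‖ := by
  have hle : (a + c) ^ 2 ≤ (a ^ 2 + c ^ 2) + (a ^ 2 + c ^ 2) := by
    rw [show (a ^ 2 + c ^ 2) + (a ^ 2 + c ^ 2) = (a + c) ^ 2 + (a - c) ^ 2 by noncomm_ring]
    exact le_add_of_nonneg_right (ha.sub hc).sq_nonneg
  calc ‖a + c‖ ^ 2 = ‖(a + c) ^ 2‖ := ((ha.add hc).norm_pow_two_pow 1).symm
    _ ≤ ‖(a ^ 2 + c ^ 2) + (a ^ 2 + c ^ 2)‖ :=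
      CStarAlgebra.norm_le_norm_of_nonneg_of_le (ha.add hc).sq_nonneg hle
    _ ≤ 2 * ‖a ^ 2 + c ^ 2‖ := (norm_add_le _ _).trans_eq (two_mul _).symm

lemma numRadius_nonneg {E : Type*} [NormedAddCommGroup E] [InnerProductSpace ℂ E]
    (T : E →L[ℂ] E) : 0 ≤ numRadius T :=
  Real.sSup_nonneg <| by rintro r ⟨x, -, rfl⟩; exact norm_nonneg _

lemma numRadius_le_of_forall {E : Type*} [NormedAddCommGroup E] [InnerProductSpace ℂ E]
    {T : E →L[ℂ] E} {c : ℝ} (hc : 0 ≤ c) (h : ∀ x, ‖x‖ = 1 → ‖inner ℂ (T x) x‖ ≤ c) :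
    numRadius T ≤ c :=
  Real.sSup_le (by rintro r ⟨x, hx, rfl⟩; exact h x hx) hc

lemma opAbs_sq (T : H →L[ℂ] H) : opAbs T ^ 2 = adjoint T * T :=
  CFC.sq_sqrt _ (by rw [← star_eq_adjoint]; exact star_mul_self_nonneg T)

lemma opAbs_pow_four (T : H →L[ℂ] H) : opAbs T ^ 4 = (adjoint T * T) ^ 2 := by
  rw [show 4 = 2 * 2 from rfl, pow_mul, opAbs_sq]

lemma norm_inner_sq_apply_self_le (T : H →L[ℂ] H) (x : H) :
    ‖inner ℂ ((T ^ 2) x) x‖ ≤ (‖T x‖ ^ 2 + ‖adjoint T x‖ ^ 2) / 2 := by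
  have h : inner ℂ ((T ^ 2) x) x = inner ℂ (T x) (adjoint T x) := by
    rw [adjoint_inner_right, sq]; rfl
  rw [h]
  nlinarith [norm_inner_le_norm (𝕜 := ℂ) (T x) (adjoint T x), sq_nonneg (‖T x‖ - ‖adjoint T x‖)]

lemma norm_sq_add_norm_adjoint_sq_le (T : H →L[ℂ] H) (x : H) :
    ‖T x‖ ^ 2 + ‖adjoint T x‖ ^ 2 ≤ ‖adjoint T * T + T * adjoint T‖ * ‖x‖ ^ 2 := by
  set S := adjoint T * T + T * adjoint T
  calc ‖T x‖ ^ 2 + ‖adjoint T x‖ ^ 2 = RCLike.re (inner ℂ (S x) x) := by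
        rw [apply_norm_sq_eq_inner_adjoint_left, apply_norm_sq_eq_inner_adjoint_left,
          adjoint_adjoint, add_apply, inner_add_left, map_add]
        rfl
    _ ≤ ‖S x‖ * ‖x‖ := re_inner_le_norm _ _
    _ ≤ ‖S‖ * ‖x‖ ^ 2 := by rw [sq, ← mul_assoc]; gcongr; exact S.le_opNorm x

lemma numRadius_sq_le (T : H →L[ℂ] H) :
    numRadius (T ^ 2) ≤ ‖adjoint T * T + T * adjoint T‖ / 2 := by
  refine numRadius_le_of_forall (by positivity) fun x hx => ?_
  have := norm_sq_add_norm_adjoint_sq_le T x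
  rw [hx, one_pow, mul_one] at this
  linarith [norm_inner_sq_apply_self_le T x]

theorem stmt_14_general (B : H →L[ℂ] H) (α : ℝ) (hα1 : α ≤ 1) :
    ((1 + α) / 8) * ‖opAbs B ^ 4 + opAbs (adjoint B) ^ 4‖ +
        ((1 - α) / 4) * numRadius (B ^ 2) ^ 2 +
        (1 / 4) * ‖opAbs B ^ 2 + opAbs (adjoint B) ^ 2‖ * numRadius (B ^ 2) ≤
      (1 / 2) * ‖opAbs B ^ 4 + opAbs (adjoint B) ^ 4‖ := by
  rw [opAbs_sq, opAbs_sq, opAbs_pow_four, opAbs_pow_four, adjoint_adjoint]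
  set M := ‖adjoint B * B + B * adjoint B‖
  set N := ‖(adjoint B * B) ^ 2 + (B * adjoint B) ^ 2‖
  set w := numRadius (B ^ 2)
  have hw0 : 0 ≤ w := numRadius_nonneg _
  have hwM : w ≤ M / 2 := numRadius_sq_le B
  have hMN : M ^ 2 ≤ 2 * N :=
    (IsSelfAdjoint.star_mul_self B).norm_add_sq_le_two_mul (IsSelfAdjoint.mul_star_self B)
  -- using `w ≤ M / 2` the left side is at most `(1 + α) N / 8 + (3 - α) M² / 16`
  nlinarith [mul_le_mul_of_nonneg_left (pow_le_pow_left₀ hw0 hwM 2) (sub_nonneg.2 hα1),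
    mul_le_mul_of_nonneg_left hwM (norm_nonneg (adjoint B * B + B * adjoint B))]

theorem stmt_14 (B : H →L[ℂ] H) (α : ℝ) (hα0 : 0 ≤ α) (hα1 : α ≤ 1) :
    ((1 + α) / 8) * ‖opAbs B ^ 4 + opAbs (adjoint B) ^ 4‖ +
        ((1 - α) / 4) * numRadius (B ^ 2) ^ 2 +
        (1 / 4) * ‖opAbs B ^ 2 + opAbs (adjoint B) ^ 2‖ * numRadius (B ^ 2) ≤
      (1 / 2) * ‖opAbs B ^ 4 + opAbs (adjoint B) ^ 4‖ :=
  stmt_14_general B α hα1
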